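/- Let m, n ≥ 1, J ⊆ [m−1], K ⊆ [n−1]. Then Ψ(M_{m,J} · M_{n,K}) = (1−q)·Σ_r C(r, |J|+1)·C(r, |K|+1)·q^r, where M are monomial quasi-symmetric functions and Ψ sends x_{i_1}^{m_1}···x_{i_k}^{m_k} (i_1 < ... < i_k) to q^{i_k}. -/

import Mathlib

open Finset

namespace CQSym

/-- The exponent-vector (weight) of a word with letters among the positive
integers: the monomial `x_{w 0} ⋯ x_{w (n-1)}`. -/
noncomputable def wt {n : ℕ} (w : Fin n → ℕ+) : ℕ+ →₀ ℕ := ∑ i, Finsupp.single (w i) 1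

/-- The fundamental quasi-symmetric function `F_{n,J}` for `J ⊆ [n-1]`
(1-based positions): the sum of `x_{w 0} ⋯ x_{w (n-1)}` over weakly increasing
words with a strict ascent at every position of `J`. -/
noncomputable def Fqsym (n : ℕ) (J : Finset ℕ) : MvPowerSeries ℕ+ ℤ :=
  fun d => (Nat.card {w : Fin n → ℕ+ //
    Monotone w ∧ (∀ i : Fin n, (i : ℕ) + 1 ∈ J → w i < w (finRotate n i)) ∧
    wt w = d} : ℤ)

/-- The monomial quasi-symmetric function `M_{n,J}` for `J ⊆ [n-1]`:
the sum over weakly increasing words with a strict ascent exactly at the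
positions of `J`. -/
noncomputable def Mqsym (n : ℕ) (J : Finset ℕ) : MvPowerSeries ℕ+ ℤ :=
  fun d => (Nat.card {w : Fin n → ℕ+ //
    Monotone w ∧
    (∀ i : Fin n, (i : ℕ) + 1 < n → (((i : ℕ) + 1 ∈ J) ↔ w i < w (finRotate n i))) ∧
    wt w = d} : ℤ)

/-- The fundamental cyclic quasi-symmetric function `F^cyc_{n,J}` for
`J ⊆ [n]` (1-based positions): the sum of `x_{w 0} ⋯ x_{w (n-1)}` over pairs
`(w, k)` such that `w` is cyclically weakly increasing from position `k`
and has a (cyclic) strict ascent at every position of `J` except possibly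
at the position just before `k`. -/
noncomputable def cFqsym (n : ℕ) (J : Finset ℕ) : MvPowerSeries ℕ+ ℤ :=
  fun d => (Nat.card {p : (Fin n → ℕ+) × Fin n //
    Monotone (fun i : Fin n => p.1 (p.2 + i)) ∧
    (∀ i : Fin n, (i : ℕ) + 1 ∈ J → i ≠ (finRotate n).symm p.2 →
      p.1 i < p.1 (finRotate n i)) ∧
    wt p.1 = d} : ℤ)

/-- The monomial cyclic quasi-symmetric function `M^cyc_{n,J}` for
`J ⊆ [n]`: the sum of `x_{w 0} ⋯ x_{w (n-1)}` over pairs `(w, k)` such that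
`w` is cyclically weakly increasing from position `k`, the position just
before `k` belongs to `J`, and at every other position the (cyclic) strict
ascents of `w` are exactly the positions of `J`. -/
noncomputable def cMqsym (n : ℕ) (J : Finset ℕ) : MvPowerSeries ℕ+ ℤ :=
  fun d => (Nat.card {p : (Fin n → ℕ+) × Fin n //
    Monotone (fun i : Fin n => p.1 (p.2 + i)) ∧
    (((finRotate n).symm p.2 : Fin n) : ℕ) + 1 ∈ J ∧
    (∀ i : Fin n, i ≠ (finRotate n).symm p.2 →
      (((i : ℕ) + 1 ∈ J) ↔ p.1 i < p.1 (finRotate n i))) ∧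
    wt p.1 = d} : ℤ)

/-- The cyclic shift `J - i` of a subset `J ⊆ [n]`, computed modulo `n`,
with representatives `1, …, n`. -/
def cshift (n : ℕ) (J : Finset ℕ) (i : ℕ) : Finset ℕ :=
  J.image fun j => (j + n - i - 1) % n + 1

/-- The complete homogeneous symmetric function `h_n`: the sum of all
monomials of degree `n`. -/
noncomputable def hqsym (n : ℕ) : MvPowerSeries ℕ+ ℤ :=
  fun d => if d.sum (fun _ e => e) = n then 1 else 0

open scoped Classical in
/-- The elementary symmetric function `e_n`: the sum of all squarefree
monomials of degree `n`. -/
noncomputable def eqsym (n : ℕ) : MvPowerSeries ℕ+ ℤ :=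
  fun d => if d.sum (fun _ e => e) = n ∧ ∀ x, d x ≤ 1 then 1 else 0

/-- The Schur function of hook shape `(n-k, 1^k)`, defined via semistandard
tableaux: a weakly increasing first row of length `n-k`, a strictly
increasing leg of length `k` below its first cell. -/
noncomputable def hookSchur (n k : ℕ) : MvPowerSeries ℕ+ ℤ :=
  fun d => (Nat.card {p : (Fin (n - k) → ℕ+) × (Fin k → ℕ+) //
    Monotone p.1 ∧ StrictMono p.2 ∧
    (∀ (h1 : 0 < n - k) (h2 : 0 < k), p.1 ⟨0, h1⟩ < p.2 ⟨0, h2⟩) ∧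
    wt p.1 + wt p.2 = d} : ℤ)

/-- The descent number of a word with (distinct) integer letters. -/
def des {N : ℕ} (w : Fin N → ℤ) : ℕ :=
  (Finset.univ.filter fun i : Fin N => (i : ℕ) + 1 < N ∧ w (finRotate N i) < w i).card

/-- The cyclic descent number of a word with (distinct) integer letters. -/
def cdes {N : ℕ} (w : Fin N → ℤ) : ℕ :=
  (Finset.univ.filter fun i : Fin N => w (finRotate N i) < w i).card

/-- `w` is a shuffle of `u` and `v`. -/
def IsShuffle {m n : ℕ} (u : Fin m → ℤ) (v : Fin n → ℤ) (w : Fin (m + n) → ℤ) : Prop :=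
  ∃ (f : Fin m → Fin (m + n)) (g : Fin n → Fin (m + n)),
    StrictMono f ∧ StrictMono g ∧ (∀ i, w (f i) = u i) ∧ (∀ j, w (g j) = v j) ∧
    (∀ x, (∃ i, f i = x) ∨ (∃ j, g j = x))

/-- The cyclic class `[w]` is a cyclic shuffle of `[u]` and `[v]`: some
cyclic rotation of `w` is a shuffle of cyclic rotations of `u` and `v`. -/
def IsCyclicShuffle {m n : ℕ} (u : Fin m → ℤ) (v : Fin n → ℤ) (w : Fin (m + n) → ℤ) : Prop :=
  ∃ (kw : Fin (m + n)) (ku : Fin m) (kv : Fin n),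
    IsShuffle (fun i => u (i + ku)) (fun i => v (i + kv)) (fun i => w (i + kw))

/-- Rotation equivalence of words satisfying a property `P`;  `Quot` of this
relation is the set of cyclic equivalence classes. -/
def RotRel {N : ℕ} (P : (Fin N → ℤ) → Prop) (w₁ w₂ : {w : Fin N → ℤ // P w}) : Prop :=
  ∃ k : Fin N, ∀ i, w₁.val i = w₂.val (i + k)

/-- Binomial coefficient with integer upper and lower arguments, zero for
negative lower argument. -/
noncomputable def zchoose (a b : ℤ) : ℤ := if 0 ≤ b then Ring.choose a b.toNat else 0

/-- The map `Ψ`, sending a monomial `x_{i₁}^{m₁} ⋯ x_{i_k}^{m_k}`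
(`i₁ < … < i_k`) to `q^{i_k}`, extended linearly. -/
noncomputable def psi (f : MvPowerSeries ℕ+ ℤ) : PowerSeries ℤ :=
  PowerSeries.mk fun r =>
    if r = 0 then MvPowerSeries.coeff 0 f
    else ∑ᶠ d ∈ {d : ℕ+ →₀ ℕ |
        ∃ m ∈ d.support, (∀ m' ∈ d.support, m' ≤ m) ∧ (m : ℕ) = r},
      MvPowerSeries.coeff d f

/-- The product `⊙` on `ℤ[[q]]` determined by `q^i ⊙ q^j = q^{max(i,j)}`. -/
noncomputable def odot (a b : PowerSeries ℤ) : PowerSeries ℤ :=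
  PowerSeries.mk fun r =>
    (PowerSeries.coeff r a) * (∑ s ∈ Finset.range (r + 1), PowerSeries.coeff s b) +
    (∑ s ∈ Finset.range r, PowerSeries.coeff s a) * (PowerSeries.coeff r b)

/-- A multivariate power series of bounded (total) degree. -/
def BoundedDeg (f : MvPowerSeries ℕ+ ℤ) : Prop :=
  ∃ D, ∀ d : ℕ+ →₀ ℕ, D < d.sum (fun _ e => e) → MvPowerSeries.coeff d f = 0

/-- Cellini's cyclic descent set of a permutation (0-based positions). -/
def cDesF {n : ℕ} (w : Fin n → Fin n) : Finset (Fin n) :=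
  Finset.univ.filter fun i => w (finRotate n i) < w i

/-- The ordinary descent set of a permutation (0-based positions). -/
def DesF {n : ℕ} (w : Fin n → Fin n) : Finset (Fin n) :=
  Finset.univ.filter fun i => (i : ℕ) + 1 < n ∧ w (finRotate n i) < w i

end CQSym

/-!
Under `Ψ`, the monomial of a pair of words indexing `M_{m,J} · M_{n,K}` goes to `q^r`, where `r`
is the largest letter of the pair. A weakly increasing word whose strict ascents are exactly at
the positions of `J` is determined by the set of its `|J| + 1` distinct letters, so there are
`C(r, |J| + 1)` such words with letters `≤ r`, and `C(r, |J| + 1) · C(r, |K| + 1)` such pairs.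
The pairs with largest letter exactly `r` are the difference of these counts at `r` and `r - 1`,
which is the coefficient of `q^r` on the right-hand side.
-/

theorem exists_eq_of_map_succ_le_add_one {f : ℕ → ℕ} (hf : ∀ i, f (i + 1) ≤ f i + 1)
    {n k : ℕ} (h0 : f 0 ≤ k) (hk : k ≤ f n) : ∃ i ≤ n, f i = k := by
  induction n with
  | zero => exact ⟨0, le_rfl, le_antisymm h0 hk⟩
  | succ n ih =>
    by_cases hkn : k ≤ f n
    · obtain ⟨i, hi, rfl⟩ := ih hkn
      exact ⟨i, by omega, rfl⟩
    · exact ⟨n + 1, le_rfl, by have := hf n; omega⟩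

theorem Monotone.lt_iff_lt_or_lt {ι α : Type*} [Preorder ι] [LinearOrder α] {f : ι → α}
    (hf : Monotone f) {a b c : ι} (hab : a ≤ b) (hbc : b ≤ c) :
    f a < f c ↔ f a < f b ∨ f b < f c := by
  have := hf hab
  have := hf hbc
  constructor
  · intro h
    by_contra!
    order
  · rintro (h | h) <;> order

theorem Fin.lt_iff_lt_of_lt_succ_iff {m : ℕ} {α β : Type*} [LinearOrder α] [LinearOrder β]
    {f : Fin m → α} {g : Fin m → β} (hf : Monotone f) (hg : Monotone g)
    (hstep : ∀ i j : Fin m, (j : ℕ) = i + 1 → (f i < f j ↔ g i < g j)) (i j : Fin m) :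
    f i < f j ↔ g i < g j := by
  rcases le_or_gt j i with hji | hij
  · exact iff_of_false (not_lt.2 (hf hji)) (not_lt.2 (hg hji))
  obtain ⟨k, hk⟩ : ∃ k, (j : ℕ) = i + k + 1 := ⟨j - i - 1, by rw [Fin.lt_def] at hij; omega⟩
  induction k generalizing j with
  | zero => exact hstep i j hk
  | succ k ih =>
    let j' : Fin m := ⟨i + k + 1, by omega⟩
    have hij' : i ≤ j' := Fin.le_def.2 (by simp [j']; omega)
    have hj'j : j' ≤ j := Fin.le_def.2 (by simp [j']; omega)
    rw [hf.lt_iff_lt_or_lt hij' hj'j, hg.lt_iff_lt_or_lt hij' hj'j,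
      ih j' (Fin.lt_def.2 (by simp [j'])) rfl, hstep j' j (by simp [j']; omega)]

theorem coe_finRotate_of_add_one_lt {m : ℕ} {i : Fin m} (h : (i : ℕ) + 1 < m) :
    (finRotate m i : ℕ) = i + 1 := by
  obtain ⟨k, rfl⟩ : ∃ k, m = k + 1 := ⟨m - 1, by omega⟩
  rw [finRotate_apply, Fin.val_add_one_of_lt (Fin.lt_def.2 (by simp; omega))]

theorem Nat.card_eq_sum_card_fiber {α β : Type*} [Finite α] (f : α → β) (t : Finset β)
    (h : ∀ a, f a ∈ t) : Nat.card α = ∑ b ∈ t, Nat.card {a // f a = b} := by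
  classical
  cases nonempty_fintype α
  rw [Nat.card_eq_fintype_card, ← Finset.card_univ, card_eq_sum_card_fiberwise fun a _ => h a]
  simp only [Nat.card_eq_fintype_card, Fintype.card_subtype]

theorem Nat.card_subtype_and_not {α : Type*} {P Q : α → Prop} [Finite {x // Q x}]
    (h : ∀ x, P x → Q x) :
    (Nat.card {x // Q x ∧ ¬ P x} : ℤ) = Nat.card {x // Q x} - Nat.card {x // P x} := by
  classical
  have hsplit := Nat.card_congr (Equiv.sumCompl fun x : {x // Q x} => P x)
  rw [Nat.card_sum, Nat.card_congr (Equiv.subtypeSubtypeEquivSubtype (h _)),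
    Nat.card_congr (Equiv.subtypeSubtypeEquivSubtypeInter Q fun x => ¬ P x)] at hsplit
  omega

namespace CQSym

def blockIndex (J : Finset ℕ) (i : ℕ) : ℕ := #{j ∈ J | j ≤ i}

theorem blockIndex_succ (J : Finset ℕ) (i : ℕ) :
    blockIndex J (i + 1) = blockIndex J i + if i + 1 ∈ J then 1 else 0 := by
  simp_rw [blockIndex, Nat.le_add_one_iff]
  rw [filter_or, card_union_of_disjoint, filter_eq' J (i + 1)]
  · split_ifs <;> simp
  · exact disjoint_filter.2 fun j _ hj => by omega

theorem blockIndex_le_card (J : Finset ℕ) (i : ℕ) : blockIndex J i ≤ J.card :=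
  card_le_card (filter_subset _ _)

theorem blockIndex_mono (J : Finset ℕ) : Monotone (blockIndex J) :=
  monotone_nat_of_le_succ fun i => by rw [blockIndex_succ]; omega

theorem blockIndex_lt_succ_iff (J : Finset ℕ) (i : ℕ) :
    blockIndex J i < blockIndex J (i + 1) ↔ i + 1 ∈ J := by
  rw [blockIndex_succ]; split_ifs <;> simpa

def IsMqsymWord {α : Type*} [LinearOrder α] (m : ℕ) (J : Finset ℕ) (w : Fin m → α) : Prop :=
  Monotone w ∧ ∀ i : Fin m, (i : ℕ) + 1 < m → ((i : ℕ) + 1 ∈ J ↔ w i < w (finRotate m i))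

section Words

variable {α β : Type*} [LinearOrder α] [LinearOrder β] {m : ℕ} {J : Finset ℕ}

theorem isMqsymWord_iff {w : Fin m → α} :
    IsMqsymWord m J w ↔ ∀ i j, w i < w j ↔ blockIndex J i < blockIndex J j := by
  have hb : Monotone fun i : Fin m => blockIndex J i :=
    (blockIndex_mono J).comp Fin.val_strictMono.monotone
  constructor
  · rintro ⟨hw, hstep⟩
    refine Fin.lt_iff_lt_of_lt_succ_iff hw hb fun i j hj => ?_
    have hrot : finRotate m i = j := Fin.ext (by rw [coe_finRotate_of_add_one_lt (by omega), hj])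
    rw [← hrot, ← hstep i (by omega), hrot, hj, blockIndex_lt_succ_iff]
  · intro h
    refine ⟨fun i j hij => not_lt.1 fun hji => ?_, fun i hi => ?_⟩
    · exact not_lt.2 (hb hij) ((h j i).1 hji)
    · rw [h, coe_finRotate_of_add_one_lt hi, blockIndex_lt_succ_iff]

theorem isMqsymWord_comp_iff {f : α → β} (hf : StrictMono f) {w : Fin m → α} :
    IsMqsymWord m J (f ∘ w) ↔ IsMqsymWord m J w := by
  simp only [isMqsymWord_iff, Function.comp_apply, hf.lt_iff_lt]

theorem IsMqsymWord.apply_eq_apply {w : Fin m → α} (hw : IsMqsymWord m J w) {i j : Fin m}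
    (h : blockIndex J i = blockIndex J j) : w i = w j := by
  have hiff := isMqsymWord_iff.1 hw
  exact le_antisymm (not_lt.1 fun hji => ((hiff j i).1 hji).ne' h)
    (not_lt.1 fun hij => ((hiff i j).1 hij).ne h)

variable (m J) in
/-- The index of the maximal constant run containing position `i`, in any word with ascent set
`J`. -/
def block (i : Fin m) : Fin (J.card + 1) :=
  ⟨blockIndex J i, Nat.lt_succ_of_le (blockIndex_le_card J i)⟩

theorem block_surjective (hm : 0 < m) (hJ : J ⊆ Icc 1 (m - 1)) :
    Function.Surjective (block m J) := by
  rintro ⟨k, hk⟩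
  have h0 : blockIndex J 0 = 0 := card_eq_zero.2 <| filter_eq_empty_iff.2 fun j hj => by
    have := mem_Icc.1 (hJ hj); omega
  have hlast : blockIndex J (m - 1) = J.card := congrArg card <| filter_true_of_mem fun j hj => by
    have := mem_Icc.1 (hJ hj); omega
  obtain ⟨i, hi, hik⟩ := exists_eq_of_map_succ_le_add_one
    (fun i => by rw [blockIndex_succ]; split_ifs <;> omega) (h0.trans_le (Nat.zero_le k))
    (hlast ▸ Nat.le_of_lt_succ hk)
  exact ⟨⟨i, by omega⟩, Fin.ext hik⟩

noncomputable def mqsymWordEquiv (hm : 0 < m) (hJ : J ⊆ Icc 1 (m - 1)) :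
    {w : Fin m → α // IsMqsymWord m J w} ≃ (Fin (J.card + 1) ↪o α) where
  toFun w := OrderEmbedding.ofStrictMono (w.1 ∘ Function.surjInv (block_surjective hm hJ))
    fun k k' hkk' => by
      have hblock := Function.surjInv_eq (block_surjective hm hJ)
      rw [← hblock k, ← hblock k'] at hkk'
      exact (isMqsymWord_iff.1 w.2 _ _).2 hkk'
  invFun v := ⟨v ∘ block m J, isMqsymWord_iff.2 fun _ _ => v.lt_iff_lt⟩
  left_inv w := Subtype.ext <| funext fun i => w.2.apply_eq_apply <|
    congrArg Fin.val (Function.surjInv_eq (block_surjective hm hJ) (block m J i))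
  right_inv v := by
    ext k
    exact congrArg v (Function.surjInv_eq (block_surjective hm hJ) k)

theorem card_isMqsymWord (hm : 0 < m) (hJ : J ⊆ Icc 1 (m - 1)) :
    Nat.card {w : Fin m → α // IsMqsymWord m J w} = (Nat.card α).choose (J.card + 1) := by
  rw [Nat.card_congr ((mqsymWordEquiv hm hJ).trans Set.powersetCard.ofFinEmbEquiv),
    Set.powersetCard.card]

end Words

section CountingSeries

variable {σ α β : Type*}

noncomputable def countingSeries (g : α → σ →₀ ℕ) : MvPowerSeries σ ℤ :=
  fun d => Nat.card {x // g x = d}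

theorem coeff_countingSeries (g : α → σ →₀ ℕ) (d : σ →₀ ℕ) :
    MvPowerSeries.coeff d (countingSeries g) = Nat.card {x // g x = d} := rfl

theorem countingSeries_mul (g : α → σ →₀ ℕ) (h : β → σ →₀ ℕ)
    [∀ d, Finite {x // g x = d}] [∀ d, Finite {y // h y = d}] :
    countingSeries g * countingSeries h = countingSeries fun p : α × β => g p.1 + h p.2 := by
  classical
  ext d
  let e : {p : α × β // g p.1 + h p.2 = d} ≃
      Σ e : antidiagonal d, {x // g x = e.1.1} × {y // h y = e.1.2} :=
    { toFun p := ⟨⟨(g p.1.1, h p.1.2), mem_antidiagonal.2 p.2⟩, ⟨p.1.1, rfl⟩, ⟨p.1.2, rfl⟩⟩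
      invFun q := ⟨(q.2.1.1, q.2.2.1), by rw [q.2.1.2, q.2.2.2]; exact mem_antidiagonal.1 q.1.2⟩
      left_inv _ := rfl
      right_inv := by
        rintro ⟨⟨⟨_, _⟩, _⟩, ⟨x, hx⟩, ⟨y, hy⟩⟩
        dsimp only at hx hy
        subst hx hy
        rfl }
  rw [MvPowerSeries.coeff_mul, coeff_countingSeries, Nat.card_congr e, Nat.card_sigma,
    ← sum_coe_sort (antidiagonal d)]
  simp [coeff_countingSeries, Nat.card_prod]

theorem finsum_mem_coeff_countingSeries (g : α → σ →₀ ℕ) (S : Set (σ →₀ ℕ))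
    [Finite {x // g x ∈ S}] :
    ∑ᶠ d ∈ S, MvPowerSeries.coeff d (countingSeries g) = Nat.card {x // g x ∈ S} := by
  classical
  let T : Finset (σ →₀ ℕ) := (Set.finite_range fun x : {x // g x ∈ S} => g x).toFinset
  have hTS : ∀ d ∈ T, d ∈ S := by
    intro d hd
    obtain ⟨x, rfl⟩ := (Set.Finite.mem_toFinset _).1 hd
    exact x.2
  rw [finsum_mem_eq_sum_of_subset _ (t := T) ?_ hTS,
    Nat.card_eq_sum_card_fiber (fun x : {x // g x ∈ S} => g x) T (by simp [T])]
  · push_cast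
    refine sum_congr rfl fun d hd => ?_
    rw [coeff_countingSeries, ← Nat.card_congr (Equiv.subtypeSubtypeEquivSubtype
      (p := fun x => g x ∈ S) (q := fun x => g x = d) fun hx => hx ▸ hTS d hd)]
  · rintro d ⟨hdS, hd⟩
    obtain ⟨⟨x, rfl⟩⟩ : Nonempty {x // g x = d} :=
      (Nat.card_pos_iff.1 <| Nat.pos_of_ne_zero fun h0 =>
        hd (by simp [coeff_countingSeries, h0])).1
    exact (Set.Finite.mem_toFinset _).2 ⟨⟨x, hdS⟩, rfl⟩

end CountingSeries

def SupportLE (r : ℕ) (d : ℕ+ →₀ ℕ) : Prop := ∀ x ∈ d.support, (x : ℕ) ≤ r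

theorem supportLE_zero_iff {d : ℕ+ →₀ ℕ} : SupportLE 0 d ↔ d = 0 := by
  refine ⟨fun h => Finsupp.support_eq_empty.1 <| eq_empty_of_forall_notMem fun x hx => ?_,
    fun h => by simp [SupportLE, h]⟩
  have := h x hx
  have := x.pos
  omega

theorem supportLE_add_iff {r : ℕ} {d d' : ℕ+ →₀ ℕ} :
    SupportLE r (d + d') ↔ SupportLE r d ∧ SupportLE r d' := by
  classical
  simp only [SupportLE, Finsupp.support_add_eq_union, forall_mem_union]

def supportLEAddEquiv {α β : Type*} (g : α → ℕ+ →₀ ℕ) (h : β → ℕ+ →₀ ℕ) (r : ℕ) :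
    {p : α × β // SupportLE r (g p.1 + h p.2)} ≃
      {x // SupportLE r (g x)} × {y // SupportLE r (h y)} :=
  (Equiv.subtypeEquivRight fun _ => supportLE_add_iff).trans
    (Equiv.subtypeProdEquivProd (p := fun x => SupportLE r (g x)) (q := fun y => SupportLE r (h y)))

theorem setOf_max_support_eq (r : ℕ) :
    {d : ℕ+ →₀ ℕ | ∃ x ∈ d.support, (∀ y ∈ d.support, y ≤ x) ∧ (x : ℕ) = r + 1} =
      {d | SupportLE (r + 1) d ∧ ¬ SupportLE r d} := by
  ext d
  simp only [Set.mem_ofPred_eq, SupportLE, not_forall, not_le]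
  constructor
  · rintro ⟨x, hx, hmax, hxr⟩
    exact ⟨fun y hy => hxr ▸ (PNat.coe_le_coe y x).2 (hmax y hy), x, hx, by omega⟩
  · rintro ⟨hle, x, hx, hxr⟩
    have hx' := hle x hx
    exact ⟨x, hx, fun y hy => PNat.coe_le_coe _ _ |>.1 (by have := hle y hy; omega), by omega⟩

section Psi

variable {α : Type*}

theorem coeff_zero_psi_countingSeries (g : α → ℕ+ →₀ ℕ) :
    PowerSeries.coeff 0 (psi (countingSeries g)) = Nat.card {x // SupportLE 0 (g x)} := by
  rw [psi, PowerSeries.coeff_mk, if_pos rfl, coeff_countingSeries,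
    Nat.card_congr (Equiv.subtypeEquivRight fun x => supportLE_zero_iff)]

theorem coeff_succ_psi_countingSeries (g : α → ℕ+ →₀ ℕ) (r : ℕ)
    [Finite {x // SupportLE (r + 1) (g x)}] :
    PowerSeries.coeff (r + 1) (psi (countingSeries g)) =
      Nat.card {x // SupportLE (r + 1) (g x)} - Nat.card {x // SupportLE r (g x)} := by
  have : Finite {x // g x ∈ {d | SupportLE (r + 1) d ∧ ¬ SupportLE r d}} :=
    Finite.of_injective (fun x => (⟨x.1, x.2.1⟩ : {x // SupportLE (r + 1) (g x)}))
      fun x y hxy => Subtype.ext (congrArg (fun z => z.1) hxy)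
  rw [psi, PowerSeries.coeff_mk, if_neg r.succ_ne_zero, setOf_max_support_eq,
    finsum_mem_coeff_countingSeries]
  exact Nat.card_subtype_and_not fun x hx y hy => (hx y hy).trans r.le_succ

end Psi

section Mqsym

variable {m : ℕ} {J : Finset ℕ}

theorem wt_apply (w : Fin m → ℕ+) (x : ℕ+) : wt w x = #{i | w i = x} := by
  classical
  simp only [wt, Finsupp.finsetSum_apply, Finsupp.single_apply]
  rw [card_filter]

theorem mem_support_wt {w : Fin m → ℕ+} {x : ℕ+} : x ∈ (wt w).support ↔ ∃ i, w i = x := by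
  simp [Finsupp.mem_support_iff, wt_apply]

theorem supportLE_wt_iff {r : ℕ} {w : Fin m → ℕ+} :
    SupportLE r (wt w) ↔ ∀ i, (w i : ℕ) ≤ r := by
  simp only [SupportLE, mem_support_wt, forall_exists_index, forall_apply_eq_imp_iff]

variable (m J) in
abbrev MqsymWord : Type := {w : Fin m → ℕ+ // IsMqsymWord m J w}

instance (d : ℕ+ →₀ ℕ) : Finite {w : MqsymWord m J // wt w.1 = d} :=
  Finite.of_injective (fun w i => (⟨w.1.1 i, by
      have hi : w.1.1 i ∈ (wt w.1.1).support := mem_support_wt.2 ⟨i, rfl⟩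
      rwa [w.2] at hi⟩ : d.support))
    fun w w' h => Subtype.ext <| Subtype.ext <| funext fun i => congrArg Subtype.val (congrFun h i)

theorem Mqsym_eq_countingSeries :
    Mqsym m J = countingSeries fun w : MqsymWord m J => wt w.1 := by
  ext d
  show (Nat.card _ : ℤ) = _
  rw [coeff_countingSeries]
  exact congrArg Nat.cast <| Nat.card_congr <|
    (Equiv.subtypeEquivRight fun w => and_assoc.symm).trans
      (Equiv.subtypeSubtypeEquivSubtypeInter (IsMqsymWord m J) (wt · = d)).symm

def pnatLeEquivFin (r : ℕ) : {x : ℕ+ // (x : ℕ) ≤ r} ≃ Fin r :=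
  (Equiv.subtypeEquiv Equiv.pnatEquivNat fun x => by
    simp [Equiv.pnatEquivNat, PNat.natPred]; have := x.pos; omega).trans Fin.equivSubtype.symm

def boundedMqsymWordEquiv (r : ℕ) :
    {w : MqsymWord m J // SupportLE r (wt w.1)} ≃
      {w : Fin m → {x : ℕ+ // (x : ℕ) ≤ r} // IsMqsymWord m J w} where
  toFun w := ⟨fun i => ⟨w.1.1 i, supportLE_wt_iff.1 w.2 i⟩,
    (isMqsymWord_comp_iff (Subtype.strictMono_coe fun x : ℕ+ => (x : ℕ) ≤ r)).1 w.1.2⟩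
  invFun w := ⟨⟨Subtype.val ∘ w.1,
      (isMqsymWord_comp_iff (Subtype.strictMono_coe fun x : ℕ+ => (x : ℕ) ≤ r)).2 w.2⟩,
    supportLE_wt_iff.2 fun i => (w.1 i).2⟩

instance (r : ℕ) : Finite {w : MqsymWord m J // SupportLE r (wt w.1)} :=
  have : Finite {x : ℕ+ // (x : ℕ) ≤ r} := .of_equiv _ (pnatLeEquivFin r).symm
  .of_equiv _ (boundedMqsymWordEquiv r).symm

theorem card_supportLE_wt (hm : 0 < m) (hJ : J ⊆ Icc 1 (m - 1)) (r : ℕ) :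
    Nat.card {w : MqsymWord m J // SupportLE r (wt w.1)} = r.choose (J.card + 1) := by
  rw [Nat.card_congr (boundedMqsymWordEquiv r), card_isMqsymWord hm hJ,
    Nat.card_congr (pnatLeEquivFin r), Nat.card_eq_fintype_card, Fintype.card_fin]

end Mqsym

section Pairs

variable {m n : ℕ} {J K : Finset ℕ} (r : ℕ)

noncomputable def boundedMqsymWordPairEquiv :
    {p : MqsymWord m J × MqsymWord n K // SupportLE r (wt p.1.1 + wt p.2.1)} ≃
      {w : MqsymWord m J // SupportLE r (wt w.1)} × {w : MqsymWord n K // SupportLE r (wt w.1)} :=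
  supportLEAddEquiv (fun w : MqsymWord m J => wt w.1) (fun w : MqsymWord n K => wt w.1) r

instance : Finite {p : MqsymWord m J × MqsymWord n K // SupportLE r (wt p.1.1 + wt p.2.1)} :=
  .of_equiv _ (boundedMqsymWordPairEquiv r).symm

theorem card_supportLE_wt_add (hm : 0 < m) (hn : 0 < n) (hJ : J ⊆ Icc 1 (m - 1))
    (hK : K ⊆ Icc 1 (n - 1)) :
    Nat.card {p : MqsymWord m J × MqsymWord n K // SupportLE r (wt p.1.1 + wt p.2.1)} =
      r.choose (J.card + 1) * r.choose (K.card + 1) := by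
  rw [Nat.card_congr (boundedMqsymWordPairEquiv r), Nat.card_prod, card_supportLE_wt hm hJ,
    card_supportLE_wt hn hK]

end Pairs

/-- `Ψ(M_{m,J} · M_{n,K}) = (1−q)·Σ_r C(r, |J|+1)·C(r, |K|+1)·q^r`. -/
theorem psi_Mqsym_product (m n : ℕ) (hm : 0 < m) (hn : 0 < n)
    (J K : Finset ℕ) (hJ : J ⊆ Finset.Icc 1 (m - 1))
    (hK : K ⊆ Finset.Icc 1 (n - 1)) :
    psi (Mqsym m J * Mqsym n K)
      = (1 - PowerSeries.X) *
          PowerSeries.mk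
            (fun r => ((r.choose (J.card + 1) * r.choose (K.card + 1) : ℕ) : ℤ)) := by
  have hcount (r : ℕ) := card_supportLE_wt_add r hm hn hJ hK
  rw [Mqsym_eq_countingSeries, Mqsym_eq_countingSeries, countingSeries_mul]
  ext (_ | r)
  · rw [coeff_zero_psi_countingSeries, hcount]
    simp
  · rw [coeff_succ_psi_countingSeries, hcount, hcount, sub_mul, one_mul, map_sub,
      PowerSeries.coeff_succ_X_mul, PowerSeries.coeff_mk, PowerSeries.coeff_mk]

end CQSym
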